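/- A point q₁ ∈ ℝ³ belongs to B₂ if and only if there exist T ≥ 0 and a P2-admissible curve q : [0,T] → ℝ³ with q(0) = (0,0,0) and q(T) = q₁. In other words, the attainable set of the second flat sub-Lorentzian Martinet problem from the origin (the causal future of the origin) is exactly B₂. -/

import Mathlib

/-!
Along an admissible curve `x - y` and `x + y` are nondecreasing, and
`(4x³ - (x - y)³)/24 - z` has derivative `(x' - y')(x + y)(3x - y)/8 ≥ 0`. Since the curve is
Lipschitz, hence absolutely continuous, integrating gives the upper bound on `z`; the symmetry
`(y, z) ↦ (-y, -z)` gives the lower one.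
Conversely, for a fixed `x` the constraints are convex in `(y, z)`. Averaging the two bang-bang
curves with `x = t` and one switch that reach the upper and the lower boundary point above
`(x, y)` therefore reaches every point in between.
-/

open MeasureTheory Set

noncomputable section

/-- A curve `(x, y, z) : [0, T] → ℝ³` is admissible for the second flat sub-Lorentzian
problem on the Martinet distribution: it is Lipschitz on `[0, T]` and for a.e.
`t ∈ [0, T]` it is differentiable with `x' ≥ |y'|` and `z' = x² y' / 2`. -/
def P2Admissible (T : ℝ) (x y z : ℝ → ℝ) : Prop :=
  0 ≤ T ∧
  (∃ K : NNReal, LipschitzOnWith K x (Icc 0 T) ∧ LipschitzOnWith K y (Icc 0 T) ∧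
    LipschitzOnWith K z (Icc 0 T)) ∧
  ∀ᵐ t ∂(volume.restrict (Icc 0 T)),
    HasDerivAt x (deriv x t) t ∧ HasDerivAt y (deriv y t) t ∧ HasDerivAt z (deriv z t) t ∧
    |deriv y t| ≤ deriv x t ∧ deriv z t = (x t) ^ 2 * deriv y t / 2

/-- The sub-Lorentzian length of an admissible curve of the second problem. -/
def P2Length (T : ℝ) (x y : ℝ → ℝ) : ℝ :=
  ∫ t in (0:ℝ)..T, Real.sqrt ((deriv x t) ^ 2 - (deriv y t) ^ 2)

/-- `q₁` is reachable from the origin by a P2-admissible curve. -/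
def P2Reaches (q₁ : ℝ × ℝ × ℝ) : Prop :=
  ∃ (T : ℝ) (x y z : ℝ → ℝ), P2Admissible T x y z ∧
    x 0 = 0 ∧ y 0 = 0 ∧ z 0 = 0 ∧ (x T, y T, z T) = q₁

/-- The sub-Lorentzian distance from the origin in the second problem: the supremum
of lengths of P2-admissible curves from the origin to `q₁` (`0` if there are none). -/
def P2dist (q₁ : ℝ × ℝ × ℝ) : ℝ :=
  sSup (insert 0 {l : ℝ | ∃ (T : ℝ) (x y z : ℝ → ℝ), P2Admissible T x y z ∧
    x 0 = 0 ∧ y 0 = 0 ∧ z 0 = 0 ∧ (x T, y T, z T) = q₁ ∧ l = P2Length T x y})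

/-- The candidate attainable set `B₂` of the second problem. -/
def B2 : Set (ℝ × ℝ × ℝ) :=
  {p | |p.2.1| ≤ p.1 ∧ ((p.1 + p.2.1) ^ 3 - 4 * p.1 ^ 3) / 24 ≤ p.2.2 ∧
    p.2.2 ≤ (4 * p.1 ^ 3 - (p.1 - p.2.1) ^ 3) / 24}

theorem AbsolutelyContinuousOnInterval.le_of_ae_deriv_nonneg {f : ℝ → ℝ} {a b : ℝ}
    (hf : AbsolutelyContinuousOnInterval f a b) (hab : a ≤ b)
    (hf' : ∀ᵐ t ∂volume.restrict (Icc a b), 0 ≤ deriv f t) : f a ≤ f b := by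
  rw [← sub_nonneg, ← hf.integral_deriv_eq_sub]
  exact intervalIntegral.integral_nonneg_of_ae_restrict hab hf'

theorem AbsolutelyContinuousOnInterval.monotoneOn_of_ae_deriv_nonneg {f : ℝ → ℝ} {a b : ℝ}
    (hf : AbsolutelyContinuousOnInterval f a b)
    (hf' : ∀ᵐ t ∂volume.restrict (Icc a b), 0 ≤ deriv f t) : MonotoneOn f (Icc a b) := by
  intro s hs t ht hst
  have hsub : uIcc s t ⊆ uIcc a b :=
    uIcc_subset_uIcc (Icc_subset_uIcc hs) (Icc_subset_uIcc ht)
  exact (hf.mono hsub).le_of_ae_deriv_nonneg hst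
    (ae_restrict_of_ae_restrict_of_subset (Icc_subset_Icc hs.1 ht.2) hf')

theorem hasDerivAt_min_const {s t : ℝ} (h : t ≠ s) :
    HasDerivAt (fun u => min u s) (if t < s then 1 else 0) t := by
  rcases h.lt_or_gt with h | h
  · rw [if_pos h]
    refine (hasDerivAt_id t).congr_of_eventuallyEq ?_
    filter_upwards [Iio_mem_nhds h] with u hu using min_eq_left hu.le
  · rw [if_neg h.not_gt]
    refine (hasDerivAt_const t s).congr_of_eventuallyEq ?_
    filter_upwards [Ioi_mem_nhds h] with u hu using min_eq_right hu.le

section Admissible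

variable {T : ℝ} {x y z : ℝ → ℝ}

theorem p2Admissible_of_hasDerivAt (hT : 0 ≤ T)
    (hx : ∃ K, LipschitzOnWith K x (Icc 0 T)) (hy : ∃ K, LipschitzOnWith K y (Icc 0 T))
    (hz : ∃ K, LipschitzOnWith K z (Icc 0 T))
    (hd : ∀ᵐ t ∂volume.restrict (Icc 0 T), ∃ x' y' z', HasDerivAt x x' t ∧ HasDerivAt y y' t ∧
      HasDerivAt z z' t ∧ |y'| ≤ x' ∧ z' = x t ^ 2 * y' / 2) :
    P2Admissible T x y z := by
  obtain ⟨Kx, hx⟩ := hx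
  obtain ⟨Ky, hy⟩ := hy
  obtain ⟨Kz, hz⟩ := hz
  refine ⟨hT, ⟨max Kx (max Ky Kz), hx.weaken (by simp), hy.weaken (by simp),
    hz.weaken (by simp)⟩, ?_⟩
  filter_upwards [hd] with t ⟨x', y', z', hx', hy', hz', hxy, hzy⟩
  rw [hx'.deriv, hy'.deriv, hz'.deriv]
  exact ⟨hx', hy', hz', hxy, hzy⟩

theorem P2Admissible.absolutelyContinuousOnInterval (h : P2Admissible T x y z) :
    AbsolutelyContinuousOnInterval x 0 T ∧ AbsolutelyContinuousOnInterval y 0 T ∧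
      AbsolutelyContinuousOnInterval z 0 T := by
  obtain ⟨hT, ⟨K, hx, hy, hz⟩, -⟩ := h
  rw [← uIcc_of_le hT] at hx hy hz
  exact ⟨hx.absolutelyContinuousOnInterval, hy.absolutelyContinuousOnInterval,
    hz.absolutelyContinuousOnInterval⟩

theorem P2Admissible.abs_sub_le (h : P2Admissible T x y z) {t : ℝ} (ht : t ∈ Icc 0 T) :
    |y t - y 0| ≤ x t - x 0 := by
  obtain ⟨hx, hy, -⟩ := h.absolutelyContinuousOnInterval
  have h0 : (0 : ℝ) ∈ Icc 0 T := ⟨le_rfl, h.1⟩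
  have hsub := (hx.fun_sub hy).monotoneOn_of_ae_deriv_nonneg (by
    filter_upwards [h.2.2] with t ⟨hx', hy', _, hxy, _⟩
    rw [(hx'.fun_sub hy').deriv]
    linarith [le_abs_self (deriv y t)]) h0 ht ht.1
  have hadd := (hx.fun_add hy).monotoneOn_of_ae_deriv_nonneg (by
    filter_upwards [h.2.2] with t ⟨hx', hy', _, hxy, _⟩
    rw [(hx'.fun_add hy').deriv]
    linarith [neg_abs_le (deriv y t)]) h0 ht ht.1
  rw [abs_le]
  constructor <;> linarith

theorem P2Admissible.z_le_of_origin (h : P2Admissible T x y z) (hx0 : x 0 = 0) (hy0 : y 0 = 0)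
    (hz0 : z 0 = 0) : z T ≤ (4 * x T ^ 3 - (x T - y T) ^ 3) / 24 := by
  obtain ⟨hx, hy, hz⟩ := h.absolutelyContinuousOnInterval
  set φ : ℝ → ℝ := fun t => (4 * x t ^ 3 - (x t - y t) ^ 3) / 24 - z t
  have hφ : AbsolutelyContinuousOnInterval φ 0 T := by
    have hxy := hx.fun_sub hy
    have hφ_eq : φ = fun t =>
        1 / 24 * (4 * (x t * x t * x t) - (x t - y t) * (x t - y t) * (x t - y t)) - z t := by
      funext t
      ring
    rw [hφ_eq]
    exact ((((hx.fun_mul hx).fun_mul hx).const_mul 4).fun_sub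
      ((hxy.fun_mul hxy).fun_mul hxy)).const_mul (1 / 24) |>.fun_sub hz
  have hmono : φ 0 ≤ φ T := hφ.le_of_ae_deriv_nonneg h.1 <| by
    filter_upwards [h.2.2, ae_restrict_mem measurableSet_Icc]
      with t ⟨hx', hy', hz', hxy, hzy⟩ ht
    have hd : HasDerivAt φ ((deriv x t - deriv y t) * (x t + y t) * (3 * x t - y t) / 8) t := by
      refine ((((hx'.fun_pow 3).const_mul 4).fun_sub ((hx'.fun_sub hy').fun_pow 3)).div_const
        24).fun_sub hz' |>.congr_deriv ?_
      rw [hzy]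
      ring
    have hcone := h.abs_sub_le ht
    rw [hx0, hy0, sub_zero, sub_zero, abs_le] at hcone
    rw [hd.deriv]
    have := abs_le.1 hxy
    have h1 : 0 ≤ deriv x t - deriv y t := by linarith
    have h2 : 0 ≤ x t + y t := by linarith
    have h3 : 0 ≤ 3 * x t - y t := by linarith
    positivity
  simp only [φ, hx0, hy0, hz0] at hmono
  linarith

theorem P2Admissible.neg (h : P2Admissible T x y z) : P2Admissible T x (-y) (-z) := by
  obtain ⟨hT, ⟨K, hx, hy, hz⟩, hd⟩ := h
  refine p2Admissible_of_hasDerivAt hT ⟨K, hx⟩ ⟨K, hy.neg⟩ ⟨K, hz.neg⟩ ?_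
  filter_upwards [hd] with t ⟨hx', hy', hz', hxy, hzy⟩
  exact ⟨_, _, _, hx', hy'.neg, hz'.neg, by rwa [abs_neg], by rw [hzy]; ring⟩

theorem P2Admissible.convex_combination {y₁ z₁ y₂ z₂ : ℝ → ℝ} {a b : ℝ} (ha : 0 ≤ a)
    (hb : 0 ≤ b) (hab : a + b = 1) (h₁ : P2Admissible T x y₁ z₁)
    (h₂ : P2Admissible T x y₂ z₂) :
    P2Admissible T x (fun t => a * y₁ t + b * y₂ t) (fun t => a * z₁ t + b * z₂ t) := by
  obtain ⟨hT, ⟨K₁, hx, hy₁, hz₁⟩, hd₁⟩ := h₁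
  obtain ⟨-, ⟨K₂, -, hy₂, hz₂⟩, hd₂⟩ := h₂
  refine p2Admissible_of_hasDerivAt hT ⟨K₁, hx⟩
    ⟨_, ((lipschitzWith_smul a).comp_lipschitzOnWith hy₁).add
      ((lipschitzWith_smul b).comp_lipschitzOnWith hy₂)⟩
    ⟨_, ((lipschitzWith_smul a).comp_lipschitzOnWith hz₁).add
      ((lipschitzWith_smul b).comp_lipschitzOnWith hz₂)⟩ ?_
  filter_upwards [hd₁, hd₂] with t ⟨hx', hy₁', hz₁', hxy₁, hzy₁⟩ ⟨_, hy₂', hz₂', hxy₂, hzy₂⟩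
  refine ⟨_, _, _, hx', (hy₁'.const_mul a).add (hy₂'.const_mul b),
    (hz₁'.const_mul a).add (hz₂'.const_mul b), ?_, by rw [hzy₁, hzy₂]; ring⟩
  calc |a * deriv y₁ t + b * deriv y₂ t| ≤ a * |deriv y₁ t| + b * |deriv y₂ t| := by
        simpa only [abs_mul, abs_of_nonneg ha, abs_of_nonneg hb] using
          abs_add_le (a * deriv y₁ t) (b * deriv y₂ t)
    _ ≤ a * deriv x t + b * deriv x t := by gcongr
    _ = deriv x t := by rw [← add_mul, hab, one_mul]

/-- The bang-bang curve with controls `(u₁, u₂) = (1, -1)` on `[0, s]` and `(1, 1)` afterwards. -/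
theorem p2Admissible_switch (hT : 0 ≤ T) (s : ℝ) :
    P2Admissible T id (fun t => t - 2 * min t s) (fun t => (t ^ 3 - 2 * min t s ^ 3) / 6) := by
  have hmin : LocallyLipschitz fun t => (t, min t s) :=
    LocallyLipschitz.id.prodMk (LocallyLipschitz.id.min_const s)
  have hlip : ∀ {g : ℝ × ℝ → ℝ}, ContDiff ℝ 1 g →
      ∃ K, LipschitzOnWith K (fun t => g (t, min t s)) (Icc 0 T) := fun hg =>
    ((hg.locallyLipschitz.comp hmin).locallyLipschitzOn).exists_lipschitzOnWith_of_compact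
      isCompact_Icc
  refine p2Admissible_of_hasDerivAt hT ⟨1, LipschitzWith.id.lipschitzOnWith⟩
    (hlip (g := fun p => p.1 - 2 * p.2) (by fun_prop))
    (hlip (g := fun p => (p.1 ^ 3 - 2 * p.2 ^ 3) / 6) (by fun_prop)) ?_
  have hs : ∀ᵐ t ∂volume.restrict (Icc 0 T), t ≠ s :=
    ae_restrict_of_ae (measure_eq_zero_iff_ae_notMem.1 (measure_singleton s))
  filter_upwards [hs] with t ht
  have hm := hasDerivAt_min_const ht
  refine ⟨1, _, _, hasDerivAt_id t, (hasDerivAt_id t).fun_sub (hm.const_mul 2),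
    ((hasDerivAt_pow 3 t).fun_sub ((hm.fun_pow 3).const_mul 2)).div_const 6, ?_, ?_⟩
  · split_ifs <;> norm_num
  · split_ifs with h
    · simp only [id_eq, min_eq_left h.le, Nat.cast_ofNat]
      ring
    · simp only [id_eq, Nat.cast_ofNat]
      ring

end Admissible

theorem P2Reaches.mem_B2 {q : ℝ × ℝ × ℝ} (h : P2Reaches q) : q ∈ B2 := by
  obtain ⟨T, x, y, z, hq, hx0, hy0, hz0, rfl⟩ := h
  have hcone := hq.abs_sub_le ⟨hq.1, le_rfl⟩
  have hup := hq.z_le_of_origin hx0 hy0 hz0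
  have hlow := hq.neg.z_le_of_origin hx0 (by simp [hy0]) (by simp [hz0])
  simp only [hx0, hy0, sub_zero, Pi.neg_apply, sub_neg_eq_add] at hcone hlow
  exact ⟨hcone, by linarith, hup⟩

theorem p2Reaches_of_mem_B2 {q : ℝ × ℝ × ℝ} (hq : q ∈ B2) : P2Reaches q := by
  obtain ⟨a, b, c⟩ := q
  obtain ⟨hba, hlow, hup⟩ : |b| ≤ a ∧ ((a + b) ^ 3 - 4 * a ^ 3) / 24 ≤ c ∧
      c ≤ (4 * a ^ 3 - (a - b) ^ 3) / 24 := hq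
  obtain ⟨hb₁, hb₂⟩ := abs_le.1 hba
  have ha : 0 ≤ a := (abs_nonneg b).trans hba
  obtain ⟨μ, ν, hμ, hν, hμν, hc⟩ : c ∈ segment ℝ (((a + b) ^ 3 - 4 * a ^ 3) / 24)
      ((4 * a ^ 3 - (a - b) ^ 3) / 24) := by
    rw [segment_eq_Icc (hlow.trans hup)]
    exact ⟨hlow, hup⟩
  have hs₁ : min 0 ((a + b) / 2) = 0 := min_eq_left (by linarith)
  have hs₂ : min 0 ((a - b) / 2) = 0 := min_eq_left (by linarith)
  have hs₁' : min a ((a + b) / 2) = (a + b) / 2 := min_eq_right (by linarith)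
  have hs₂' : min a ((a - b) / 2) = (a - b) / 2 := min_eq_right (by linarith)
  refine ⟨a, _, _, _, (p2Admissible_switch ha ((a + b) / 2)).neg.convex_combination hμ hν hμν
    (p2Admissible_switch ha ((a - b) / 2)), rfl, ?_, ?_, ?_⟩
  · simp [hs₁, hs₂]
  · simp [hs₁, hs₂]
  · simp only [Pi.neg_apply, id, hs₁', hs₂', Prod.mk.injEq, true_and]
    constructor
    · linear_combination b * hμν
    · rw [← hc, smul_eq_mul, smul_eq_mul]
      ring

/-- The attainable set of the second flat sub-Lorentzian Martinet problem from the
origin (the causal future of the origin) is exactly `B₂`. -/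
theorem attainable_set_eq_B2 (q₁ : ℝ × ℝ × ℝ) : q₁ ∈ B2 ↔ P2Reaches q₁ :=
  ⟨p2Reaches_of_mem_B2, P2Reaches.mem_B2⟩
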